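/- Let (R, m) be a commutative local ring with residue field k = R/m and let φ : R^a → R^b be an R-module homomorphism. Then φ is injective with free cokernel of finite rank if and only if the induced map φ̄ : k^a → k^b is injective. -/

import Mathlib

/-!
Over a local ring, Nakayama's lemma shows that a map between finite free modules is split
injective exactly when it stays injective modulo the maximal ideal. A map into a projective
module is split injective exactly when it is injective with projective cokernel, and a finitely
generated projective module over a local ring is free.
-/

theorem Module.exists_linearEquiv_fin_iff_free_and_finite {R M : Type*} [Ring R]
    [AddCommGroup M] [Module R M] :
    (∃ c : ℕ, Nonempty (M ≃ₗ[R] (Fin c → R))) ↔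
      Module.Free R M ∧ Module.Finite R M := by
  constructor
  · rintro ⟨c, ⟨e⟩⟩
    exact ⟨.of_equiv e.symm, .equiv e.symm⟩
  · rintro ⟨_, _⟩
    exact ⟨_, ⟨((Module.Free.chooseBasis R M).reindex (Fintype.equivFin _)).equivFun⟩⟩

theorem LinearMap.exists_leftInverse_iff_injective_and_projective_cokernel {R M N : Type*}
    [Ring R] [AddCommGroup M] [AddCommGroup N] [Module R M] [Module R N] [Module.Projective R N]
    (f : M →ₗ[R] N) :
    (∃ l : N →ₗ[R] M, l ∘ₗ f = LinearMap.id) ↔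
      Function.Injective f ∧ Module.Projective R (N ⧸ LinearMap.range f) := by
  have splits (hf : Function.Injective f) :=
    (f.exact_map_mkQ_range.split_tfae hf (Submodule.mkQ_surjective _)).out 1 0
  constructor
  · rintro ⟨l, hl⟩
    have hf : Function.Injective f :=
      Function.HasLeftInverse.injective ⟨l, LinearMap.congr_fun hl⟩
    obtain ⟨s, hs⟩ := (splits hf).mp ⟨l, hl⟩
    exact ⟨hf, .of_split s _ hs⟩
  · rintro ⟨hf, _⟩
    exact (splits hf).mpr
      (Module.projective_lifting_property _ LinearMap.id (Submodule.mkQ_surjective _))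

theorem Module.free_iff_projective_of_isLocalRing {R P : Type*} [CommRing R] [IsLocalRing R]
    [AddCommGroup P] [Module R P] [Module.Finite R P] :
    Module.Free R P ↔ Module.Projective R P :=
  ⟨fun _ ↦ inferInstance, fun _ ↦ Module.free_of_flat_of_isLocalRing⟩

/-- Let `(R, m)` be a commutative local ring with residue field `k = R/m` and
let `φ : R^a → R^b` be an `R`-module homomorphism.  Then `φ` is injective with free cokernel of
finite rank if and only if the induced map `φ̄ : k^a → k^b` (obtained by tensoring with the
residue field) is injective. -/
theorem injective_with_free_cokernel_iff_residue_injective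
    (R : Type) [CommRing R] [IsLocalRing R] (a b : ℕ)
    (φ : (Fin a → R) →ₗ[R] (Fin b → R)) :
    (Function.Injective φ ∧ ∃ c : ℕ,
        Nonempty (((Fin b → R) ⧸ LinearMap.range φ) ≃ₗ[R] (Fin c → R)))
    ↔ Function.Injective (LinearMap.baseChange (IsLocalRing.ResidueField R) φ) := by
  rw [LinearMap.baseChange_eq_ltensor,
    ← IsLocalRing.split_injective_iff_lTensor_residueField_injective,
    φ.exists_leftInverse_iff_injective_and_projective_cokernel,
    Module.exists_linearEquiv_fin_iff_free_and_finite, Module.free_iff_projective_of_isLocalRing,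
    and_iff_left (Module.Finite.quotient R _)]
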